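/- arXiv:1505.02203 — 5 statements merged into one kernel-verified Lean document; each statement's English description precedes it below -/
import Mathlib

section
/- Grioli's theorem: For F ∈ GL⁺(n) with polar decomposition F = R·U (R ∈ SO(n), U symmetric positive definite), the minimum over Q ∈ SO(n) of the Frobenius norm ‖QᵀF − Id‖ is attained uniquely at Q = R, and the minimal value equals ‖U − Id‖ = ‖√(FᵀF) − Id‖. -/
open Matrix
open scoped Classical

/-- Matrix exponential on real `n × n` matrices. -/
noncomputable def mexp {n : ℕ} (X : Matrix (Fin n) (Fin n) ℝ) : Matrix (Fin n) (Fin n) ℝ :=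
  NormedSpace.exp X

/-- Symmetric part. -/
noncomputable def symPart {n : ℕ} (X : Matrix (Fin n) (Fin n) ℝ) : Matrix (Fin n) (Fin n) ℝ :=
  (1 / 2 : ℝ) • (X + Xᵀ)

/-- Skew-symmetric part. -/
noncomputable def skewPart {n : ℕ} (X : Matrix (Fin n) (Fin n) ℝ) : Matrix (Fin n) (Fin n) ℝ :=
  (1 / 2 : ℝ) • (X - Xᵀ)

/-- Deviatoric (trace-free) part. -/
noncomputable def devPart {n : ℕ} (X : Matrix (Fin n) (Fin n) ℝ) : Matrix (Fin n) (Fin n) ℝ :=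
  X - (X.trace / n) • (1 : Matrix (Fin n) (Fin n) ℝ)

/-- Squared Frobenius norm. -/
noncomputable def frobSq {n : ℕ} (X : Matrix (Fin n) (Fin n) ℝ) : ℝ := (Xᵀ * X).trace

/-- Frobenius norm. -/
noncomputable def frobNorm {n : ℕ} (X : Matrix (Fin n) (Fin n) ℝ) : ℝ := Real.sqrt (frobSq X)

/-- Principal matrix logarithm: the symmetric matrix `X` with `mexp X = P`, when it exists. -/
noncomputable def matLog {n : ℕ} (P : Matrix (Fin n) (Fin n) ℝ) : Matrix (Fin n) (Fin n) ℝ :=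
  if h : ∃ X : Matrix (Fin n) (Fin n) ℝ, X.IsSymm ∧ mexp X = P then h.choose else 0

/-! Write `Qᵀ F = W U` with `W = Qᵀ R` orthogonal and `U = S²`, `S = √U` symmetric. Expanding
the squares gives the exact identity
`‖W U - 1‖² = ‖U - 1‖² + ‖W S - S‖²`,
since both sides equal `tr (U²) - 2 tr (W U) + n`. Hence `‖Qᵀ F - 1‖ ≥ ‖U - 1‖`, with equality
only if `W S = S`, i.e. `W = 1` because `S` is invertible. -/

theorem Matrix.PosDef.exists_transpose_eq_mul_self_eq {ι : Type*} [Fintype ι] [DecidableEq ι]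
    {U : Matrix ι ι ℝ} (hU : U.PosDef) : ∃ S : Matrix ι ι ℝ, Sᵀ = S ∧ S * S = U ∧ IsUnit S := by
  open scoped MatrixOrder in
  have hSS : CFC.sqrt U * CFC.sqrt U = U := CFC.sqrt_mul_sqrt_self U hU.posSemidef.nonneg
  refine ⟨CFC.sqrt U, ?_, hSS, ?_⟩
  · simpa [star_eq_conjTranspose] using (CFC.sqrt_nonneg U).isSelfAdjoint.star_eq
  · rw [isUnit_iff_isUnit_det, isUnit_iff_ne_zero]
    intro hdet
    have := congrArg det hSS
    rw [det_mul, hdet, zero_mul] at this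
    exact hU.det_pos.ne this

section Frobenius

variable {n : ℕ}

theorem frobSq_eq_sum (X : Matrix (Fin n) (Fin n) ℝ) : frobSq X = ∑ i, ∑ j, X j i ^ 2 := by
  simp [frobSq, Matrix.trace, Matrix.mul_apply, sq]

theorem frobSq_nonneg (X : Matrix (Fin n) (Fin n) ℝ) : 0 ≤ frobSq X := by
  rw [frobSq_eq_sum]
  positivity

theorem frobSq_eq_zero_iff {X : Matrix (Fin n) (Fin n) ℝ} : frobSq X = 0 ↔ X = 0 := by
  refine ⟨fun h => ?_, fun h => by simp [h, frobSq]⟩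
  ext j i
  rw [frobSq_eq_sum, Finset.sum_eq_zero_iff_of_nonneg (fun _ _ => by positivity)] at h
  have hi := h i (Finset.mem_univ i)
  rw [Finset.sum_eq_zero_iff_of_nonneg (fun _ _ => by positivity)] at hi
  simpa using hi j (Finset.mem_univ j)

theorem frobNorm_le_frobNorm_iff {X Y : Matrix (Fin n) (Fin n) ℝ} :
    frobNorm X ≤ frobNorm Y ↔ frobSq X ≤ frobSq Y :=
  Real.sqrt_le_sqrt_iff (frobSq_nonneg Y)

theorem frobSq_sub_one (A : Matrix (Fin n) (Fin n) ℝ) :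
    frobSq (A - 1) = frobSq A - 2 * A.trace + n := by
  have h : (A - 1)ᵀ * (A - 1) = Aᵀ * A - Aᵀ - A + 1 := by
    rw [transpose_sub, transpose_one]; noncomm_ring
  rw [frobSq, h, trace_add, trace_sub, trace_sub, trace_transpose, trace_one, Fintype.card_fin,
    frobSq]
  ring

theorem frobSq_orthogonal_mul {W : Matrix (Fin n) (Fin n) ℝ} (hW : Wᵀ * W = 1)
    (A : Matrix (Fin n) (Fin n) ℝ) : frobSq (W * A) = frobSq A := by
  rw [frobSq, frobSq, transpose_mul, Matrix.mul_assoc, ← Matrix.mul_assoc Wᵀ, hW,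
    Matrix.one_mul]

theorem frobSq_mul_sub_self {W S : Matrix (Fin n) (Fin n) ℝ} (hW : Wᵀ * W = 1) (hS : Sᵀ = S) :
    frobSq (W * S - S) = 2 * ((S * S).trace - (W * (S * S)).trace) := by
  have hexpand :
      (W * S - S)ᵀ * (W * S - S) = S * (Wᵀ * W) * S - S * Wᵀ * S - S * W * S + S * S := by
    rw [transpose_sub, transpose_mul, hS]; noncomm_ring
  have hcross : (S * W * S).trace = (W * (S * S)).trace := by
    rw [Matrix.mul_assoc, trace_mul_comm, Matrix.mul_assoc]
  have hcross' : (S * Wᵀ * S).trace = (S * W * S).trace := by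
    rw [← trace_transpose, transpose_mul, transpose_mul, transpose_transpose, hS, Matrix.mul_assoc]
  rw [frobSq, hexpand, hW, Matrix.mul_one, trace_add, trace_sub, trace_sub, hcross', hcross]
  ring

theorem frobSq_orthogonal_mul_sub_one {W S : Matrix (Fin n) (Fin n) ℝ} (hW : Wᵀ * W = 1)
    (hS : Sᵀ = S) :
    frobSq (W * (S * S) - 1) = frobSq (S * S - 1) + frobSq (W * S - S) := by
  rw [frobSq_sub_one, frobSq_sub_one, frobSq_orthogonal_mul hW, frobSq_mul_sub_self hW hS]
  ring

end Frobenius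

theorem grioli_general {n : ℕ} {F R U : Matrix (Fin n) (Fin n) ℝ}
    (hR : Rᵀ * R = 1) (hU : U.PosDef)
    (hF : F = R * U) :
    (∀ Q : Matrix (Fin n) (Fin n) ℝ, Qᵀ * Q = 1 → Q.det = 1 →
      frobNorm (U - 1) ≤ frobNorm (Qᵀ * F - 1)) ∧
    frobNorm (Rᵀ * F - 1) = frobNorm (U - 1) ∧
    (∀ Q : Matrix (Fin n) (Fin n) ℝ, Qᵀ * Q = 1 → Q.det = 1 →
      frobNorm (Qᵀ * F - 1) = frobNorm (U - 1) → Q = R) := by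
  obtain ⟨S, hS, rfl, hSunit⟩ := hU.exists_transpose_eq_mul_self_eq
  have hsplit : ∀ Q : Matrix (Fin n) (Fin n) ℝ, Qᵀ * Q = 1 →
      frobSq (Qᵀ * F - 1) = frobSq (S * S - 1) + frobSq (Qᵀ * R * S - S) := fun Q hQ => by
    have hW : (Qᵀ * R)ᵀ * (Qᵀ * R) = 1 := by
      rw [transpose_mul, transpose_transpose, Matrix.mul_assoc, ← Matrix.mul_assoc Q,
        mul_eq_one_comm.mp hQ, Matrix.one_mul, hR]
    rw [← frobSq_orthogonal_mul_sub_one hW hS, hF, Matrix.mul_assoc]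
  refine ⟨fun Q hQ _ => ?_, by rw [hF, ← Matrix.mul_assoc, hR, Matrix.one_mul], ?_⟩
  · rw [frobNorm_le_frobNorm_iff, hsplit Q hQ]
    linarith [frobSq_nonneg (Qᵀ * R * S - S)]
  · intro Q hQ _ heq
    have hzero : frobSq (Qᵀ * R * S - S) = 0 := by
      linarith [hsplit Q hQ, frobNorm_le_frobNorm_iff.mp heq.le, frobSq_nonneg (Qᵀ * R * S - S)]
    have hW1 : Qᵀ * R = 1 := hSunit.mul_right_cancel <| by
      rw [Matrix.one_mul]
      exact sub_eq_zero.mp (frobSq_eq_zero_iff.mp hzero)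
    rw [← Matrix.one_mul R, ← mul_eq_one_comm.mp hQ, Matrix.mul_assoc, hW1, Matrix.mul_one]

/-- Grioli's theorem. -/
theorem grioli {n : ℕ} {F R U : Matrix (Fin n) (Fin n) ℝ}
    (hR : Rᵀ * R = 1) (hRdet : R.det = 1) (hU : U.PosDef) (hU2 : U * U = Fᵀ * F)
    (hF : F = R * U) :
    (∀ Q : Matrix (Fin n) (Fin n) ℝ, Qᵀ * Q = 1 → Q.det = 1 →
      frobNorm (U - 1) ≤ frobNorm (Qᵀ * F - 1)) ∧
    frobNorm (Rᵀ * F - 1) = frobNorm (U - 1) ∧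
    (∀ Q : Matrix (Fin n) (Fin n) ℝ, Qᵀ * Q = 1 → Q.det = 1 →
      frobNorm (Qᵀ * F - 1) = frobNorm (U - 1) → Q = R) :=
  grioli_general hR hU hF
end

section
/- The minimization in Grioli's theorem is equivalent to the maximization of the trace: for F ∈ GL⁺(n) with polar decomposition F = R·U, the maximum over Q ∈ SO(n) of tr(QᵀF) equals tr(U). -/
open Matrix
open scoped Classical

section
variable {m : Type*} [Fintype m] [DecidableEq m]

open scoped MatrixOrder in
theorem Matrix.trace_transpose_mul_self_mul_nonneg (B : Matrix m m ℝ) {U : Matrix m m ℝ}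
    (hU : U.PosSemidef) : 0 ≤ (Bᵀ * B * U).trace := by
  set S := CFC.sqrt U
  have hS : Sᵀ = S := by
    simpa [IsHermitian] using (CFC.sqrt_nonneg U).posSemidef.isHermitian
  have hSS : S * S = U := CFC.sqrt_mul_sqrt_self U hU.nonneg
  have hgram : (Bᵀ * B * U).trace = ((B * S)ᵀ * (B * S)).trace := by
    rw [transpose_mul, hS, ← hSS, ← mul_assoc, trace_mul_comm, ← mul_assoc, ← mul_assoc,
      mul_assoc (S * Bᵀ)]
  rw [hgram]
  simpa using (posSemidef_conjTranspose_mul_self (B * S)).trace_nonneg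

/-- `2 (tr U - tr (N U)) = tr ((1 - N)ᵀ (1 - N) U)` for orthogonal `N` and symmetric `U`. -/
theorem Matrix.trace_mul_le_trace_of_transpose_mul_self_eq_one {N U : Matrix m m ℝ}
    (hN : Nᵀ * N = 1) (hU : U.PosSemidef) : (N * U).trace ≤ U.trace := by
  have hdefect : (1 - N)ᵀ * (1 - N) = (1 - N) + (1 - Nᵀ) := by
    rw [transpose_sub, transpose_one]
    noncomm_ring [hN]
  have hUt : Uᵀ = U := by simpa [IsHermitian] using hU.isHermitian
  have htr : (Nᵀ * U).trace = (N * U).trace := by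
    rw [← trace_transpose, transpose_mul, transpose_transpose, hUt, trace_mul_comm]
  have hnonneg := trace_transpose_mul_self_mul_nonneg (1 - N) hU
  rw [hdefect, add_mul, sub_mul, sub_mul, one_mul, trace_add, trace_sub, trace_sub, htr]
    at hnonneg
  linarith

end

theorem grioli_trace_form_general {n : ℕ} {F R U : Matrix (Fin n) (Fin n) ℝ}
    (hR : Rᵀ * R = 1) (hU : U.PosDef)
    (hF : F = R * U) :
    (∀ Q : Matrix (Fin n) (Fin n) ℝ, Qᵀ * Q = 1 → Q.det = 1 →
      (Qᵀ * F).trace ≤ U.trace) ∧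
    (Rᵀ * F).trace = U.trace := by
  refine ⟨fun Q hQ _ => ?_, by rw [hF, ← mul_assoc, hR, one_mul]⟩
  have hQR : (Qᵀ * R)ᵀ * (Qᵀ * R) = 1 := by
    rw [transpose_mul, transpose_transpose, mul_assoc, ← mul_assoc Q, mul_eq_one_comm.mp hQ,
      one_mul, hR]
  rw [hF, ← mul_assoc]
  exact trace_mul_le_trace_of_transpose_mul_self_eq_one hQR hU.posSemidef

/-- Trace-maximization form of Grioli's theorem. -/
theorem grioli_trace_form {n : ℕ} {F R U : Matrix (Fin n) (Fin n) ℝ}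
    (hR : Rᵀ * R = 1) (hRdet : R.det = 1) (hU : U.PosDef) (hU2 : U * U = Fᵀ * F)
    (hF : F = R * U) :
    (∀ Q : Matrix (Fin n) (Fin n) ℝ, Qᵀ * Q = 1 → Q.det = 1 →
      (Qᵀ * F).trace ≤ U.trace) ∧
    (Rᵀ * F).trace = U.trace :=
  grioli_trace_form_general hR hU hF
end

section
/- For F ∈ GL⁺(n), the geodesic distance of the cofactor Cof F = (det F)·F^{−T} to SO(n), with respect to the left-GL(n)-invariant, right-O(n)-invariant metric with parameters μ, μ_c, κ, equals μ‖dev_n log U‖² + (κ(n−1)²/2)[tr(log U)]², where U = √(FᵀF). In particular, ‖dev_n log √((Cof F)ᵀ(Cof F))‖² = ‖dev_n log U‖² and [tr(log √((Cof F)ᵀ(Cof F)))]² = (n−1)²[tr(log U)]². -/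
open Matrix
open scoped Classical

/-!
The right stretch of `Cof F` is `(det F) • U⁻¹`: both are positive semidefinite square roots of
`(Cof F)ᵀ (Cof F) = (det F)² F⁻¹ F⁻ᵀ = ((det F) U⁻¹)²`. On positive definite matrices the
logarithm turns this into `log W = log (det F) • 1 - log U`. The scalar summand has no
deviatoric part, so `dev log W = -dev log U`; and since `tr (log U) = log (det U) = log (det F)`,
`tr (log W) = n log (det F) - tr (log U) = (n - 1) tr (log U)`.
-/

namespace Matrix

open scoped MatrixOrder

variable {m : Type*} [Fintype m] [DecidableEq m]

lemma det_eq_of_mul_self_eq_transpose_mul {F U : Matrix m m ℝ} (hF : 0 < F.det) (hU : U.PosDef)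
    (hUF : U * U = Fᵀ * F) : U.det = F.det := by
  have hsq : U.det ^ 2 = F.det ^ 2 := by
    simpa [sq, det_transpose] using congrArg det hUF
  exact (sq_eq_sq₀ hU.det_pos.le hF.le).1 hsq

lemma eq_det_smul_inv_of_mul_self_eq {F U W : Matrix m m ℝ} (hF : 0 < F.det) (hU : U.PosDef)
    (hUF : U * U = Fᵀ * F) (hW : W.PosSemidef)
    (hWF : W * W = (F.det • (F⁻¹)ᵀ)ᵀ * (F.det • (F⁻¹)ᵀ)) :
    W = F.det • U⁻¹ := by
  have hgram : F⁻¹ * (F⁻¹)ᵀ = U⁻¹ * U⁻¹ := by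
    rw [← mul_inv_rev, hUF, mul_inv_rev, transpose_nonsing_inv]
  refine (CFC.sq_eq_sq_iff W _ hW.nonneg (hU.inv.smul hF).posSemidef.nonneg).1 ?_
  rw [sq, sq, hWF, transpose_smul, transpose_transpose, smul_mul_smul, hgram, smul_mul_smul]

-- The L2 operator norm induces the usual topology on matrices, so the lemmas about `CFC.log`
-- and `NormedSpace.exp` proved for normed algebras apply to `mexp` as defined above.
open scoped Norms.L2Operator

lemma PosDef.log_inv {A : Matrix m m ℝ} (hA : A.PosDef) : CFC.log A⁻¹ = -CFC.log A := by
  conv_lhs => rw [← CFC.exp_log A hA.isStrictlyPositive, ← exp_neg]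
  exact CFC.log_exp _ IsSelfAdjoint.log.neg

lemma PosDef.trace_log {A : Matrix m m ℝ} (hA : A.PosDef) :
    (CFC.log A).trace = Real.log A.det := by
  rw [CFC.log, hA.1.cfc_eq, IsHermitian.cfc, Unitary.conjStarAlgAut_apply, trace_mul_cycle,
    Unitary.star_mul_self_of_mem (SetLike.coe_mem _), one_mul, trace_diagonal,
    hA.1.det_eq_prod_eigenvalues]
  simp only [RCLike.ofReal_real_eq_id, Function.comp_apply, id]
  exact (Real.log_prod fun i _ => (hA.eigenvalues_pos i).ne').symm

lemma IsSymm.log_mexp {n : ℕ} {X : Matrix (Fin n) (Fin n) ℝ} (hX : X.IsSymm) :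
    CFC.log (mexp X) = X :=
  CFC.log_exp X (isHermitian_iff_isSymm.2 hX)

end Matrix

section MatLog

open scoped Matrix.Norms.L2Operator MatrixOrder

variable {n : ℕ}

lemma matLog_eq_log {P : Matrix (Fin n) (Fin n) ℝ} (hP : P.PosDef) : matLog P = CFC.log P := by
  have hex : ∃ X : Matrix (Fin n) (Fin n) ℝ, X.IsSymm ∧ mexp X = P :=
    ⟨CFC.log P, isHermitian_iff_isSymm.1 IsSelfAdjoint.log, CFC.exp_log P hP.isStrictlyPositive⟩
  obtain ⟨hsymm, hexp⟩ := hex.choose_spec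
  calc matLog P = CFC.log (mexp hex.choose) := by rw [hsymm.log_mexp, matLog, dif_pos hex]
    _ = CFC.log P := by rw [hexp]

lemma matLog_smul_inv {U : Matrix (Fin n) (Fin n) ℝ} (hU : U.PosDef) {c : ℝ} (hc : 0 < c) :
    matLog (c • U⁻¹) = Real.log c • 1 - matLog U := by
  rw [matLog_eq_log (hU.inv.smul hc), matLog_eq_log hU,
    CFC.log_smul' _ hc hU.inv.isStrictlyPositive, hU.log_inv, Algebra.algebraMap_eq_smul_one,
    sub_eq_add_neg]

lemma trace_smul_one_sub (a : ℝ) (X : Matrix (Fin n) (Fin n) ℝ) :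
    (a • 1 - X).trace = n * a - X.trace := by
  simp [mul_comm]

lemma devPart_smul_one_sub (a : ℝ) (X : Matrix (Fin n) (Fin n) ℝ) :
    devPart (a • 1 - X) = -devPart X := by
  rcases Nat.eq_zero_or_pos n with rfl | hn
  · exact Subsingleton.elim _ _
  · have hn' : (n : ℝ) ≠ 0 := by positivity
    rw [devPart, devPart, trace_smul_one_sub, sub_div, mul_div_cancel_left₀ a hn']
    module

lemma frobSq_neg (X : Matrix (Fin n) (Fin n) ℝ) : frobSq (-X) = frobSq X := by
  simp [frobSq]

end MatLog

theorem cofactor_log_strain {n : ℕ} {F U W : Matrix (Fin n) (Fin n) ℝ}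
    (hFdet : 0 < F.det) (hU : U.PosDef) (hU2 : U * U = Fᵀ * F)
    (hW : W.PosDef) (hW2 : W * W = (F.det • (F⁻¹)ᵀ)ᵀ * (F.det • (F⁻¹)ᵀ)) :
    frobSq (devPart (matLog W)) = frobSq (devPart (matLog U)) ∧
    ((matLog W).trace) ^ 2 = ((n : ℝ) - 1) ^ 2 * ((matLog U).trace) ^ 2 := by
  have hlogW : matLog W = Real.log F.det • 1 - matLog U := by
    rw [eq_det_smul_inv_of_mul_self_eq hFdet hU hU2 hW.posSemidef hW2, matLog_smul_inv hU hFdet]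
  have htrU : (matLog U).trace = Real.log F.det := by
    rw [matLog_eq_log hU, hU.trace_log, det_eq_of_mul_self_eq_transpose_mul hFdet hU hU2]
  refine ⟨by rw [hlogW, devPart_smul_one_sub, frobSq_neg], ?_⟩
  rw [hlogW, trace_smul_one_sub, htrU]
  ring
end

section
/- For a strictly monotone scale function e : (0,∞) → ℝ, the induced primary matrix function E on PSym(n), defined by applying e to the eigenvalues in a spectral decomposition, is strictly monotone: ⟨E(U₁) − E(U₂), U₁ − U₂⟩ > 0 for all U₁ ≠ U₂ in PSym(n); in particular, E is injective. -/
open Matrix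
open scoped Classical

/-- Primary matrix function induced by the scale function `e` via spectral decomposition. -/
noncomputable def primaryMF {n : ℕ} (e : ℝ → ℝ) {U : Matrix (Fin n) (Fin n) ℝ}
    (hU : U.IsHermitian) : Matrix (Fin n) (Fin n) ℝ :=
  (hU.eigenvectorUnitary : Matrix (Fin n) (Fin n) ℝ) *
    Matrix.diagonal (fun i => e (hU.eigenvalues i)) *
    star (hU.eigenvectorUnitary : Matrix (Fin n) (Fin n) ℝ)

/-! Write `U₁ = V₁ Λ V₁ᵀ`, `U₂ = V₂ M V₂ᵀ` and `W = V₁ᵀ V₂`. Since the squared entries of the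
orthogonal matrix `W` form a doubly stochastic matrix, the pairing of two primary matrix functions is
`⟨f(U₁) - f(U₂), g(U₁) - g(U₂)⟩ = ∑ᵢⱼ Wᵢⱼ² (f λᵢ - f μⱼ) (g λᵢ - g μⱼ)`.
For `f = e`, `g = id` every term is nonnegative because `e` is monotone. For `f = g = id` the sum is
`‖U₁ - U₂‖²`, so if `U₁ ≠ U₂` some `Wᵢⱼ ≠ 0` with `λᵢ ≠ μⱼ`, and strict monotonicity makes that term
of the first sum positive. Injectivity follows because the pairing vanishes when `E(U₁) = E(U₂)`. -/

section Order

variable {R : Type*} [Ring R] [LinearOrder R] [IsStrictOrderedRing R] {e : R → R} {s : Set R}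

theorem MonotoneOn.sub_mul_sub_nonneg (he : MonotoneOn e s) {a b : R} (ha : a ∈ s) (hb : b ∈ s) :
    0 ≤ (e a - e b) * (a - b) := by
  rcases le_total a b with h | h
  · exact mul_nonneg_of_nonpos_of_nonpos (sub_nonpos.2 (he ha hb h)) (sub_nonpos.2 h)
  · exact mul_nonneg (sub_nonneg.2 (he hb ha h)) (sub_nonneg.2 h)

theorem StrictMonoOn.sub_mul_sub_pos (he : StrictMonoOn e s) {a b : R} (ha : a ∈ s) (hb : b ∈ s)
    (hab : a ≠ b) : 0 < (e a - e b) * (a - b) := by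
  rcases hab.lt_or_gt with h | h
  · exact mul_pos_of_neg_of_neg (sub_neg.2 (he ha hb h)) (sub_neg.2 h)
  · exact mul_pos (sub_pos.2 (he hb ha h)) (sub_pos.2 h)

theorem StrictMonoOn.sum_sq_mul_sub_mul_sub_pos {ι κ : Type*} [Fintype ι] [Fintype κ]
    (he : StrictMonoOn e s) {x : ι → R} {y : κ → R} (hx : ∀ i, x i ∈ s) (hy : ∀ j, y j ∈ s)
    (w : ι → κ → R) (h : 0 < ∑ i, ∑ j, w i j ^ 2 * ((x i - y j) * (x i - y j))) :
    0 < ∑ i, ∑ j, w i j ^ 2 * ((e (x i) - e (y j)) * (x i - y j)) := by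
  rw [← Fintype.sum_prod_type'] at h ⊢
  obtain ⟨⟨i, j⟩, -, hij⟩ := Finset.exists_lt_of_sum_lt (Finset.sum_const_zero.trans_lt h)
  have hw : w i j ≠ 0 := by rintro hw; simp [hw] at hij
  have hxy : x i ≠ y j := by rintro hxy; simp [hxy] at hij
  refine Finset.sum_pos' (fun p _ => ?_) ⟨(i, j), Finset.mem_univ _, ?_⟩
  · exact mul_nonneg (sq_nonneg _) (he.monotoneOn.sub_mul_sub_nonneg (hx _) (hy _))
  · exact mul_pos (sq_pos_of_ne_zero hw) (he.sub_mul_sub_pos (hx i) (hy j) hxy)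

end Order

namespace Matrix

variable {ι R : Type*} [Fintype ι] [DecidableEq ι] [CommRing R]

theorem trace_transpose_mul_diagonal_mul_transpose (V₁ V₂ : Matrix ι ι R) (a b : ι → R) :
    ((V₁ * diagonal a * V₁ᵀ)ᵀ * (V₂ * diagonal b * V₂ᵀ)).trace
      = ∑ i, ∑ j, (V₁ᵀ * V₂) i j ^ 2 * a i * b j := by
  set W := V₁ᵀ * V₂
  have hcycle : ((V₁ * diagonal a * V₁ᵀ)ᵀ * (V₂ * diagonal b * V₂ᵀ)).trace
      = (diagonal a * W * diagonal b * Wᵀ).trace := calc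
    _ = (V₁ * (diagonal a * W * diagonal b * V₂ᵀ)).trace := by
      simp only [W, transpose_mul, transpose_transpose, diagonal_transpose, Matrix.mul_assoc]
    _ = (diagonal a * W * diagonal b * V₂ᵀ * V₁).trace := trace_mul_comm _ _
    _ = _ := by simp only [W, transpose_mul, transpose_transpose, Matrix.mul_assoc]
  rw [hcycle, trace]
  refine Finset.sum_congr rfl fun i _ => ?_
  rw [diag_apply, mul_apply]
  simp only [mul_diagonal, diagonal_mul, transpose_apply]
  exact Finset.sum_congr rfl fun j _ => by ring

theorem sum_apply_sq_of_mul_transpose_eq_one {W : Matrix ι ι R} (hW : W * Wᵀ = 1) (i : ι) :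
    ∑ j, W i j ^ 2 = 1 := by
  simpa [mul_apply, sq] using congrFun (congrFun hW i) i

theorem trace_transpose_mul_diagonal_mul_transpose_self {V : Matrix ι ι R} (hV : Vᵀ * V = 1)
    (a b : ι → R) : ((V * diagonal a * Vᵀ)ᵀ * (V * diagonal b * Vᵀ)).trace = ∑ i, a i * b i := by
  rw [trace_transpose_mul_diagonal_mul_transpose, hV]
  simp [one_apply]

theorem trace_transpose_sub_mul_sub_diagonal {V₁ V₂ : Matrix ι ι R} (hV₁ : V₁ᵀ * V₁ = 1)
    (hV₂ : V₂ᵀ * V₂ = 1) (a b c d : ι → R) :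
    ((V₁ * diagonal a * V₁ᵀ - V₂ * diagonal b * V₂ᵀ)ᵀ *
        (V₁ * diagonal c * V₁ᵀ - V₂ * diagonal d * V₂ᵀ)).trace
      = ∑ i, ∑ j, (V₁ᵀ * V₂) i j ^ 2 * ((a i - b j) * (c i - d j)) := by
  set W := V₁ᵀ * V₂
  have hrow : ∀ i, ∑ j, W i j ^ 2 = 1 := sum_apply_sq_of_mul_transpose_eq_one <| by
    simp only [W, transpose_mul, transpose_transpose, Matrix.mul_assoc,
      ← Matrix.mul_assoc V₂, mul_eq_one_comm.1 hV₂, Matrix.one_mul, hV₁]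
  have hcol : ∀ j, ∑ i, W i j ^ 2 = 1 := sum_apply_sq_of_mul_transpose_eq_one (W := Wᵀ) <| by
    simp only [W, transpose_mul, transpose_transpose, Matrix.mul_assoc,
      ← Matrix.mul_assoc V₁, mul_eq_one_comm.1 hV₁, Matrix.one_mul, hV₂]
  have h₁₁ : ∑ i, a i * c i = ∑ i, ∑ j, W i j ^ 2 * (a i * c i) := by
    simp only [← Finset.sum_mul, hrow, one_mul]
  have h₂₂ : ∑ j, b j * d j = ∑ i, ∑ j, W i j ^ 2 * (b j * d j) := by
    rw [Finset.sum_comm]; simp only [← Finset.sum_mul, hcol, one_mul]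
  have h₂₁ : ∑ i, ∑ j, (V₂ᵀ * V₁) i j ^ 2 * b i * c j = ∑ i, ∑ j, W i j ^ 2 * (b j * c i) := by
    rw [show V₂ᵀ * V₁ = Wᵀ by simp [W], Finset.sum_comm]
    exact Finset.sum_congr rfl fun i _ => Finset.sum_congr rfl fun j _ => by
      rw [transpose_apply]; ring
  rw [transpose_sub, sub_mul, mul_sub, mul_sub, trace_sub, trace_sub, trace_sub,
    trace_transpose_mul_diagonal_mul_transpose_self hV₁,
    trace_transpose_mul_diagonal_mul_transpose_self hV₂,
    trace_transpose_mul_diagonal_mul_transpose V₁ V₂,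
    trace_transpose_mul_diagonal_mul_transpose V₂ V₁, h₁₁, h₂₂, h₂₁]
  simp only [← Finset.sum_sub_distrib]
  exact Finset.sum_congr rfl fun i _ => Finset.sum_congr rfl fun j _ => by ring

theorem trace_transpose_mul_self_pos {m k : Type*} [Fintype m] [Fintype k]
    {X : Matrix m k ℝ} (hX : X ≠ 0) : 0 < (Xᵀ * X).trace := by
  rw [← conjTranspose_eq_transpose_of_trivial]
  exact (posSemidef_conjTranspose_mul_self X).trace_nonneg.lt_of_ne
    (Ne.symm (trace_conjTranspose_mul_self_eq_zero_iff.not.2 hX))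

end Matrix

section PrimaryMF

variable {n : ℕ} {U A B : Matrix (Fin n) (Fin n) ℝ}

theorem Matrix.IsHermitian.transpose_eigenvectorUnitary_mul_self (hU : U.IsHermitian) :
    (hU.eigenvectorUnitary : Matrix (Fin n) (Fin n) ℝ)ᵀ * hU.eigenvectorUnitary = 1 := by
  rw [← conjTranspose_eq_transpose_of_trivial, ← star_eq_conjTranspose, Unitary.coe_star_mul_self]

theorem primaryMF_eq (e : ℝ → ℝ) (hU : U.IsHermitian) :
    primaryMF e hU = (hU.eigenvectorUnitary : Matrix (Fin n) (Fin n) ℝ) *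
      diagonal (e ∘ hU.eigenvalues) * (hU.eigenvectorUnitary : Matrix (Fin n) (Fin n) ℝ)ᵀ := by
  rw [primaryMF, star_eq_conjTranspose, conjTranspose_eq_transpose_of_trivial]
  rfl

theorem primaryMF_id (hU : U.IsHermitian) : primaryMF id hU = U := by
  conv_rhs => rw [hU.spectral_theorem]
  simp [primaryMF, RCLike.ofReal_real_eq_id]

theorem trace_transpose_primaryMF_sub_mul_primaryMF_sub (f g : ℝ → ℝ) (hA : A.IsHermitian)
    (hB : B.IsHermitian) :
    ((primaryMF f hA - primaryMF f hB)ᵀ * (primaryMF g hA - primaryMF g hB)).trace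
      = ∑ i, ∑ j,
          ((hA.eigenvectorUnitary : Matrix (Fin n) (Fin n) ℝ)ᵀ * hB.eigenvectorUnitary) i j ^ 2 *
          ((f (hA.eigenvalues i) - f (hB.eigenvalues j)) *
            (g (hA.eigenvalues i) - g (hB.eigenvalues j))) := by
  simp only [primaryMF_eq]
  exact trace_transpose_sub_mul_sub_diagonal hA.transpose_eigenvectorUnitary_mul_self
    hB.transpose_eigenvectorUnitary_mul_self _ _ _ _

end PrimaryMF

theorem primaryMF_strictMono {n : ℕ} (e : ℝ → ℝ) (he : StrictMonoOn e (Set.Ioi 0))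
    {U₁ U₂ : Matrix (Fin n) (Fin n) ℝ} (h₁ : U₁.PosDef) (h₂ : U₂.PosDef) :
    (U₁ ≠ U₂ →
      0 < ((primaryMF e h₁.1 - primaryMF e h₂.1)ᵀ * (U₁ - U₂)).trace) ∧
    (primaryMF e h₁.1 = primaryMF e h₂.1 → U₁ = U₂) := by
  have hpair := trace_transpose_primaryMF_sub_mul_primaryMF_sub e id h₁.1 h₂.1
  have hdist := trace_transpose_primaryMF_sub_mul_primaryMF_sub id id h₁.1 h₂.1
  rw [primaryMF_id, primaryMF_id] at hpair hdist
  have hmono : U₁ ≠ U₂ → 0 < ((primaryMF e h₁.1 - primaryMF e h₂.1)ᵀ * (U₁ - U₂)).trace := by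
    intro hne
    rw [hpair]
    exact he.sum_sq_mul_sub_mul_sub_pos h₁.eigenvalues_pos h₂.eigenvalues_pos _
      (hdist ▸ trace_transpose_mul_self_pos (sub_ne_zero.2 hne))
  refine ⟨hmono, fun hE => ?_⟩
  by_contra hne
  simpa [hE] using hmono hne
end

section
/- If a hyperelastic energy has the form W(F) = Ψ(‖dev_n log U‖, |tr(log U)|) with U = √(FᵀF), then W satisfies the tension-compression symmetry W(F⁻¹) = W(F) for all F ∈ GL⁺(n). -/
open Matrix
open scoped Classical

/-! Write `F = R U` with `R = F U⁻¹` orthogonal (polar decomposition). The stretch of `F⁻¹` is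
`V⁻¹` for the left stretch `V = R U Rᵀ`, as both are the positive definite square root of
`F⁻ᵀ F⁻¹`; hence `log` of it is `-R (log U) Rᵀ`. Conjugation by an orthogonal matrix commutes
with `dev` and preserves trace and Frobenius norm, and the sign disappears under the norm and
the absolute value. -/

-- `CFC.log` needs a normed algebra structure on matrices; the L² operator norm gives one
-- inducing the entrywise topology that `mexp` is built on.
open scoped Matrix.Norms.L2Operator MatrixOrder

section MatLog

variable {n : ℕ}

theorem eq_of_isSymm_of_mexp_eq {X Y : Matrix (Fin n) (Fin n) ℝ} (hX : X.IsSymm) (hY : Y.IsSymm)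
    (h : mexp X = mexp Y) : X = Y := by
  rw [← CFC.log_exp X hX, ← CFC.log_exp Y hY]
  exact congrArg CFC.log h

theorem exists_isSymm_mexp_eq {P : Matrix (Fin n) (Fin n) ℝ} (hP : P.PosDef) :
    ∃ X : Matrix (Fin n) (Fin n) ℝ, X.IsSymm ∧ mexp X = P :=
  ⟨CFC.log P, IsSelfAdjoint.log, CFC.exp_log P hP.isStrictlyPositive⟩

theorem matLog_eq_of_mexp_eq {P X : Matrix (Fin n) (Fin n) ℝ} (hX : X.IsSymm)
    (hXP : mexp X = P) : matLog P = X := by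
  have hP : ∃ Z : Matrix (Fin n) (Fin n) ℝ, Z.IsSymm ∧ mexp Z = P := ⟨X, hX, hXP⟩
  rw [matLog, dif_pos hP]
  exact eq_of_isSymm_of_mexp_eq hP.choose_spec.1 hX (hP.choose_spec.2.trans hXP.symm)

theorem isSymm_matLog_and_mexp_matLog {P : Matrix (Fin n) (Fin n) ℝ} (hP : P.PosDef) :
    (matLog P).IsSymm ∧ mexp (matLog P) = P := by
  have hP' := exists_isSymm_mexp_eq hP
  rw [matLog, dif_pos hP']
  exact hP'.choose_spec

theorem matLog_inv {P : Matrix (Fin n) (Fin n) ℝ} (hP : P.PosDef) :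
    matLog P⁻¹ = -matLog P := by
  obtain ⟨hsymm, hexp⟩ := isSymm_matLog_and_mexp_matLog hP
  refine matLog_eq_of_mexp_eq (by rw [Matrix.IsSymm, Matrix.transpose_neg, hsymm]) ?_
  rw [mexp, Matrix.exp_neg, ← mexp, hexp]

theorem matLog_conj_orthogonal {R P : Matrix (Fin n) (Fin n) ℝ} (hR : Rᵀ * R = 1)
    (hP : P.PosDef) : matLog (R * P * Rᵀ) = R * matLog P * Rᵀ := by
  obtain ⟨hsymm, hexp⟩ := isSymm_matLog_and_mexp_matLog hP
  have hRinv : R⁻¹ = Rᵀ := Matrix.inv_eq_left_inv hR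
  refine matLog_eq_of_mexp_eq ?_ ?_
  · rw [Matrix.IsSymm, Matrix.transpose_mul, Matrix.transpose_mul, Matrix.transpose_transpose,
      hsymm, Matrix.mul_assoc]
  · rw [mexp, ← hRinv, Matrix.exp_conj R _ ⟨⟨R, Rᵀ, mul_eq_one_comm.mp hR, hR⟩, rfl⟩, ← mexp, hexp]

end MatLog

section OrthogonalInvariance

variable {n : ℕ} {R : Matrix (Fin n) (Fin n) ℝ}

theorem trace_conj_orthogonal (hR : Rᵀ * R = 1) (A : Matrix (Fin n) (Fin n) ℝ) :
    (R * A * Rᵀ).trace = A.trace := by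
  rw [Matrix.trace_mul_cycle, hR, Matrix.one_mul]

theorem devPart_conj_orthogonal (hR : Rᵀ * R = 1) (A : Matrix (Fin n) (Fin n) ℝ) :
    devPart (R * A * Rᵀ) = R * devPart A * Rᵀ := by
  rw [devPart, devPart, trace_conj_orthogonal hR, Matrix.mul_sub, Matrix.sub_mul,
    Matrix.mul_smul, Matrix.smul_mul, Matrix.mul_one, mul_eq_one_comm.mp hR]

theorem frobNorm_conj_orthogonal (hR : Rᵀ * R = 1) (A : Matrix (Fin n) (Fin n) ℝ) :
    frobNorm (R * A * Rᵀ) = frobNorm A := by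
  have hprod : (R * A * Rᵀ)ᵀ * (R * A * Rᵀ) = R * (Aᵀ * A) * Rᵀ := by
    simp only [Matrix.transpose_mul, Matrix.transpose_transpose, Matrix.mul_assoc]
    rw [← Matrix.mul_assoc Rᵀ R, hR, Matrix.one_mul]
  rw [frobNorm, frobNorm, frobSq, frobSq, hprod, trace_conj_orthogonal hR]

theorem devPart_neg (A : Matrix (Fin n) (Fin n) ℝ) : devPart (-A) = -devPart A := by
  simp only [devPart, Matrix.trace_neg, neg_div, neg_smul, sub_neg_eq_add, neg_sub]
  abel

theorem frobNorm_neg (A : Matrix (Fin n) (Fin n) ℝ) : frobNorm (-A) = frobNorm A := by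
  simp [frobNorm, frobSq]

end OrthogonalInvariance

section PolarDecomposition

variable {m : Type*} [Fintype m] [DecidableEq m] {F U : Matrix m m ℝ}

theorem isUnit_of_mul_self_eq_transpose_mul_self (hU : IsUnit U) (hU2 : U * U = Fᵀ * F) :
    IsUnit F := by
  have hdet : U.det * U.det = F.det * F.det := by
    rw [← Matrix.det_mul, hU2, Matrix.det_mul, Matrix.det_transpose]
  have hU0 : U.det ≠ 0 := ((Matrix.isUnit_iff_isUnit_det U).mp hU).ne_zero
  refine (Matrix.isUnit_iff_isUnit_det F).mpr (isUnit_iff_ne_zero.mpr fun hF => hU0 ?_)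
  simpa [hF] using hdet

theorem transpose_mul_self_polarFactor (hU : U.PosDef) (hU2 : U * U = Fᵀ * F) :
    (F * U⁻¹)ᵀ * (F * U⁻¹) = 1 := by
  have hUdet : IsUnit U.det := (Matrix.isUnit_iff_isUnit_det U).mp hU.isUnit
  have hUT : Uᵀ = U := (Matrix.isHermitian_iff_isSymm.mp hU.isHermitian).eq
  calc (F * U⁻¹)ᵀ * (F * U⁻¹) = U⁻¹ * (Fᵀ * F) * U⁻¹ := by
        rw [Matrix.transpose_mul, Matrix.transpose_nonsing_inv, hUT]
        simp only [Matrix.mul_assoc]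
    _ = 1 := by
        rw [← hU2, ← Matrix.mul_assoc, Matrix.nonsing_inv_mul U hUdet, Matrix.one_mul,
          Matrix.mul_nonsing_inv U hUdet]

theorem polarFactor_conj_eq (hU : U.PosDef) :
    F * U⁻¹ * U * (F * U⁻¹)ᵀ = F * U⁻¹ * Fᵀ := by
  have hUdet : IsUnit U.det := (Matrix.isUnit_iff_isUnit_det U).mp hU.isUnit
  have hUT : Uᵀ = U := (Matrix.isHermitian_iff_isSymm.mp hU.isHermitian).eq
  rw [Matrix.transpose_mul, Matrix.transpose_nonsing_inv, hUT, Matrix.mul_assoc F,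
    Matrix.nonsing_inv_mul U hUdet, Matrix.mul_one, Matrix.mul_assoc]

theorem inv_eq_mul_inv_mul_transpose {U' : Matrix m m ℝ} (hU : U.PosDef) (hU2 : U * U = Fᵀ * F)
    (hU' : U'.PosDef) (hU'2 : U' * U' = (F⁻¹)ᵀ * F⁻¹) : U'⁻¹ = F * U⁻¹ * Fᵀ := by
  have hF := isUnit_of_mul_self_eq_transpose_mul_self hU.isUnit hU2
  have hFdet : IsUnit F.det := (Matrix.isUnit_iff_isUnit_det F).mp hF
  have hUdet : IsUnit U.det := (Matrix.isUnit_iff_isUnit_det U).mp hU.isUnit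
  have hV : (F * U⁻¹ * Fᵀ).PosDef := by
    simpa [Matrix.star_eq_conjTranspose] using
      (Matrix.IsUnit.posDef_star_right_conjugate_iff hF).mpr hU.inv
  refine (CFC.mul_self_eq_mul_self_iff _ _ hU'.inv.posSemidef.nonneg hV.posSemidef.nonneg).mp ?_
  calc U'⁻¹ * U'⁻¹ = F * Fᵀ := by
        rw [← Matrix.mul_inv_rev, hU'2, Matrix.mul_inv_rev, Matrix.transpose_nonsing_inv,
          Matrix.nonsing_inv_nonsing_inv F hFdet,
          Matrix.nonsing_inv_nonsing_inv Fᵀ (by rwa [Matrix.det_transpose])]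
    _ = F * U⁻¹ * (U * U) * U⁻¹ * Fᵀ := by
        rw [Matrix.mul_assoc F U⁻¹, ← Matrix.mul_assoc U⁻¹, Matrix.nonsing_inv_mul U hUdet,
          Matrix.one_mul, Matrix.mul_assoc F, Matrix.mul_nonsing_inv U hUdet, Matrix.mul_one]
    _ = F * U⁻¹ * Fᵀ * (F * U⁻¹ * Fᵀ) := by
        rw [hU2]; simp only [Matrix.mul_assoc]

end PolarDecomposition

theorem tension_compression_symmetry_general {n : ℕ} (Ψ : ℝ → ℝ → ℝ)
    {F U U' : Matrix (Fin n) (Fin n) ℝ}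
    (hU : U.PosDef) (hU2 : U * U = Fᵀ * F)
    (hU' : U'.PosDef) (hU'2 : U' * U' = (F⁻¹)ᵀ * F⁻¹) :
    Ψ (frobNorm (devPart (matLog U'))) |(matLog U').trace| =
      Ψ (frobNorm (devPart (matLog U))) |(matLog U).trace| := by
  set R := F * U⁻¹
  have hR : Rᵀ * R = 1 := transpose_mul_self_polarFactor hU hU2
  have hlog : matLog U' = -(R * matLog U * Rᵀ) := by
    rw [← Matrix.nonsing_inv_nonsing_inv U' hU'.det_pos.ne'.isUnit, matLog_inv hU'.inv,
      inv_eq_mul_inv_mul_transpose hU hU2 hU' hU'2, ← polarFactor_conj_eq hU,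
      matLog_conj_orthogonal hR hU]
  rw [hlog, devPart_neg, devPart_conj_orthogonal hR, frobNorm_neg, frobNorm_conj_orthogonal hR,
    Matrix.trace_neg, trace_conj_orthogonal hR, abs_neg]

/-- Tension-compression symmetry of energies expressed in the logarithmic strain measures. -/
theorem tension_compression_symmetry {n : ℕ} (Ψ : ℝ → ℝ → ℝ)
    {F U U' : Matrix (Fin n) (Fin n) ℝ}
    (hFdet : 0 < F.det) (hU : U.PosDef) (hU2 : U * U = Fᵀ * F)
    (hU' : U'.PosDef) (hU'2 : U' * U' = (F⁻¹)ᵀ * F⁻¹) :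
    Ψ (frobNorm (devPart (matLog U'))) |(matLog U').trace| =
      Ψ (frobNorm (devPart (matLog U))) |(matLog U).trace| :=
  tension_compression_symmetry_general Ψ hU hU2 hU' hU'2
end
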